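/- Let f : ℝ → ℝ be Lipschitz continuous and suppose that for every t the time-t flow map x ↦ φ(t, x) of the ODE u' = f(u) is a polynomial in x. Then there exist constants a, b ∈ ℝ such that f(u) = a·u + b for all u; in particular each φ(t, ·) is an affine (degree ≤ 1) polynomial. -/

import Mathlib

open Matrix

noncomputable def norm2 {n : ℕ} (v : Fin n → ℝ) : ℝ := Real.sqrt (∑ i, v i ^ 2)

def inner2 {n : ℕ} (u v : Fin n → ℝ) : ℝ := ∑ i, u i * v i

noncomputable def specNorm {m n : ℕ} (A : Matrix (Fin m) (Fin n) ℝ) : ℝ :=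
  ‖LinearMap.toContinuousLinearMap (Matrix.toEuclideanLin A)‖

theorem symPart_isHermitian {n : ℕ} (A : Matrix (Fin n) (Fin n) ℝ) :
    (((1:ℝ)/2) • (A + Aᵀ)).IsHermitian := by
  unfold Matrix.IsHermitian
  ext i j
  simp [Matrix.conjTranspose_apply, Matrix.transpose_apply]
  ring

/-- The logarithmic 2-norm: largest eigenvalue of the symmetric part (A + Aᵀ)/2. -/
noncomputable def mu2 {n : ℕ} (A : Matrix (Fin n) (Fin n) ℝ) : ℝ :=
  ⨆ i, (symPart_isHermitian A).eigenvalues i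

/-- The singular values of A: square roots of the eigenvalues of AᵀA. -/
noncomputable def singVals {m n : ℕ} (A : Matrix (Fin m) (Fin n) ℝ) : Fin n → ℝ :=
  fun i => Real.sqrt ((Matrix.isHermitian_conjTranspose_mul_self A).eigenvalues i)

/-!
Uniqueness of solutions makes the time-`(-t)` map a left inverse of the time-`t` map. Both are
polynomials, and `deg (q ∘ p) = deg q · deg p` forces every flow map to have degree one, i.e. to be
affine in the initial value. Differentiating the affine flow `φ s x = x (φ s 1 - φ s 0) + φ s 0`
at `s = 0` shows that the vector field is affine as well.
-/

section Flow

variable {E : Type*} [NormedAddCommGroup E] [NormedSpace ℝ E] {f : E → E} {K : NNReal}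
  {φ : ℝ → E → E}

theorem flow_add (hf : LipschitzWith K f) (hinit : ∀ x, φ 0 x = x)
    (hflow : ∀ x t, HasDerivAt (fun s => φ s x) (f (φ t x)) t) (t s : ℝ) (x : E) :
    φ (t + s) x = φ s (φ t x) := by
  have hshift : ∀ u, HasDerivAt (fun u => φ (t + u) x) (f (φ (t + u) x)) u := fun u =>
    (hflow x (t + u)).comp_const_add t u
  have hsol := ODE_solution_unique_univ (v := fun _ => f) (s := fun _ => Set.univ) (t₀ := 0)
    (fun _ => hf.lipschitzOnWith) (fun u => ⟨hshift u, trivial⟩)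
    (fun u => ⟨hflow (φ t x) u, trivial⟩) (by simp only [add_zero, hinit])
  exact congrFun hsol s

theorem flow_neg_flow (hf : LipschitzWith K f) (hinit : ∀ x, φ 0 x = x)
    (hflow : ∀ x t, HasDerivAt (fun s => φ s x) (f (φ t x)) t) (t : ℝ) (x : E) :
    φ (-t) (φ t x) = x := by
  rw [← flow_add hf hinit hflow, add_neg_cancel, hinit]

end Flow

namespace Polynomial

variable {R : Type*} [CommRing R]

theorem degree_le_one_of_leftInverse_eval [IsDomain R] [Infinite R] {p q : R[X]}
    (h : Function.LeftInverse (eval · q) (eval · p)) : p.degree ≤ 1 := by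
  have hcomp : q.comp p = X := Polynomial.funext fun x => by simp [eval_comp, h x]
  have hdeg : q.natDegree * p.natDegree = 1 := by rw [← natDegree_comp, hcomp, natDegree_X]
  exact degree_le_of_natDegree_le (Nat.eq_one_of_mul_eq_one_left hdeg).le

theorem eval_eq_of_degree_le_one {p : R[X]} (h : p.degree ≤ 1) (x : R) :
    p.eval x = x * (p.eval 1 - p.eval 0) + p.eval 0 := by
  rw [eq_X_add_C_of_degree_le_one h]
  simp only [eval_add, eval_mul, eval_C, eval_X]
  ring

end Polynomial

theorem eq_affine_of_flow_affine {f : ℝ → ℝ} {φ : ℝ → ℝ → ℝ} (hinit : ∀ x, φ 0 x = x)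
    (hflow : ∀ x t, HasDerivAt (fun s => φ s x) (f (φ t x)) t)
    (haffine : ∀ s x, φ s x = x * (φ s 1 - φ s 0) + φ s 0) (u : ℝ) :
    f u = (f 1 - f 0) * u + f 0 := by
  have hflow0 : ∀ x, HasDerivAt (fun s => φ s x) (f x) 0 := fun x => by
    simpa only [hinit] using hflow x 0
  have hcomb : HasDerivAt (fun s => u * (φ s 1 - φ s 0) + φ s 0) (u * (f 1 - f 0) + f 0) 0 :=
    (((hflow0 1).sub (hflow0 0)).const_mul u).add (hflow0 0)
  rw [(hflow0 u).unique (by simpa only [← haffine] using hcomb)]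
  ring

theorem polynomial_flow_is_affine (f : ℝ → ℝ) (K : NNReal) (hf : LipschitzWith K f)
    (φ : ℝ → ℝ → ℝ)
    (hinit : ∀ x : ℝ, φ 0 x = x)
    (hflow : ∀ (x t : ℝ), HasDerivAt (fun s => φ s x) (f (φ t x)) t)
    (hpoly : ∀ t : ℝ, ∃ p : Polynomial ℝ, ∀ x : ℝ, φ t x = p.eval x) :
    ∃ a b : ℝ, (∀ u : ℝ, f u = a * u + b) ∧
      ∀ t : ℝ, ∃ p : Polynomial ℝ, p.degree ≤ 1 ∧ ∀ x : ℝ, φ t x = p.eval x := by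
  have hdeg : ∀ t, ∃ p : Polynomial ℝ, p.degree ≤ 1 ∧ ∀ x, φ t x = p.eval x := by
    intro t
    obtain ⟨p, hp⟩ := hpoly t
    obtain ⟨q, hq⟩ := hpoly (-t)
    refine ⟨p, Polynomial.degree_le_one_of_leftInverse_eval (q := q) fun x => ?_, hp⟩
    show q.eval (p.eval x) = x
    rw [← hp, ← hq, flow_neg_flow hf hinit hflow]
  have haffine : ∀ s x, φ s x = x * (φ s 1 - φ s 0) + φ s 0 := by
    intro s x
    obtain ⟨p, hp1, hp⟩ := hdeg s
    rw [hp, hp, hp]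
    exact p.eval_eq_of_degree_le_one hp1 x
  exact ⟨f 1 - f 0, f 0, eq_affine_of_flow_affine hinit hflow haffine, hdeg⟩
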